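/- Let n ≥ 3 and let P = M[R_n] + K·E_{n,n} be the subalgebra of M_n(K) of matrices whose n-th row is zero except possibly the (n,n) entry. If B is a proper subalgebra of P with B ≠ M[R_n] and the dimension of B over K equals n² − 2n + 3, then B is similar to one of the two subalgebras M·E_{n,n} + M[R_n, C_1] + K·E_{1,1} or M·E_{n,n} + M[R_n, R_{n-1}] + K·E_{n-1,n-1}; that is, there exists an invertible S ∈ M_n(K) conjugating B onto one of these two subalgebras. -/

import Mathlib

/-!
Let `ℓ` be the last index and `m = n - 1`. The elements of `B` with zero `ℓ`-th row form a
subspace `B₀` of codimension at most one in `B`. Compressing `B₀` to the `m × m` corner away from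
`ℓ` gives a subalgebra `Q` of `M_m(K)`; the kernel of the compression consists of `ℓ`-th columns
and gives a `Q`-invariant subspace `W` of `K^m`, so `dim B₀ = dim Q + dim W` with `dim W ≤ m`.

A proper subalgebra `Q` of `M_m(K)` has dimension at most `m² - m + 1`. If it were larger, `Q`
would meet the matrices supported on one row, hence contain a rank-one matrix `u vᵀ`, and then
all `x yᵀ` with `x ∈ span (u, Q u)` and `y ∈ span (v, vᵀ Q)`. Either both spans are everything,
so `Q = M_m(K)`, or the first span or the orthogonal of the second is a proper invariant subspace
of some dimension `k`; then `Q` is conjugate into a block triangular algebra of dimension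
`m² - k (m - k) ≤ m² - m + 1`, with equality only for `k = 1` or `k = m - 1`.

If `dim B = m² + 2`, the case `Q = M_m(K)` forces `W = K^m` and, counting, `B = M[R_n]`. Otherwise
every inequality above is an equality: `Q` is conjugate by some `g` to the stabilizer of a
coordinate line or hyperplane. Both contain `1`, which makes `B` the full preimage of `Q` in `P`,
and conjugation by `diag(g, 1)` yields the two normal forms.
-/

open Module Matrix Pointwise

theorem Nat.sub_mul_eq_sub_one_add {m k : ℕ} (h0 : 0 < k) (hk : k < m) :
    (m - k) * k = m - 1 + (m - k - 1) * (k - 1) := by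
  obtain ⟨a, rfl⟩ : ∃ a, k = a + 1 := ⟨k - 1, by omega⟩
  obtain ⟨b, rfl⟩ : ∃ b, m = a + 1 + b + 1 := ⟨m - (a + 1) - 1, by omega⟩
  rw [show a + 1 + b + 1 - (a + 1) = b + 1 by omega, show a + 1 + b + 1 - 1 = a + b + 1 by omega,
    Nat.add_sub_cancel, Nat.add_sub_cancel]
  ring

theorem Fintype.card_subtype_ne_add_one {ι : Type*} [Fintype ι] [DecidableEq ι] (ℓ : ι) :
    Fintype.card {i // i ≠ ℓ} + 1 = Fintype.card ι := by
  rw [Fintype.card_subtype_compl, Fintype.card_subtype_eq]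
  have := Fintype.card_pos_iff.2 ⟨ℓ⟩
  omega

section LinearAlgebra

variable {K : Type*} [Field K]

theorem Submodule.finrank_map_add_finrank_inf_ker {V W : Type*} [AddCommGroup V] [Module K V]
    [AddCommGroup W] [Module K W] [FiniteDimensional K V] (f : V →ₗ[K] W) (p : Submodule K V) :
    finrank K (p.map f) + finrank K ↥(p ⊓ LinearMap.ker f) = finrank K p := by
  have h := LinearMap.finrank_range_add_finrank_ker (f.domRestrict p)
  rw [LinearMap.range_domRestrict, LinearMap.ker_domRestrict] at h
  rw [← h, ← LinearEquiv.finrank_eq (Submodule.comapSubtypeEquivOfLe inf_le_left),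
    Submodule.comap_inf, Submodule.comap_subtype_self, top_inf_eq]

theorem Submodule.exists_basis_adapted {V ι : Type*} [AddCommGroup V] [Module K V]
    [FiniteDimensional K V] [Fintype ι] (W : Submodule K V) (s : Finset ι)
    (hs : s.card = finrank K W) (hι : Fintype.card ι = finrank K V) :
    ∃ c : Basis ι K V, (∀ j ∈ s, c j ∈ W) ∧ ∀ w ∈ W, ∀ i ∉ s, c.repr w i = 0 := by
  classical
  obtain ⟨W', hW'⟩ := W.exists_isCompl
  have hcompl : Fintype.card {i // i ∉ s} = finrank K W' := by
    have := Submodule.finrank_add_eq_of_isCompl hW'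
    rw [Fintype.card_subtype_compl, Fintype.card_coe]
    omega
  let bW : Basis s K W := (finBasisOfFinrankEq K W hs.symm).reindex s.equivFin.symm
  let bW' : Basis {i // i ∉ s} K W' :=
    (finBasisOfFinrankEq K W' hcompl.symm).reindex (Fintype.equivFin _).symm
  let c := ((bW.prod bW').map (W.prodEquivOfIsCompl W' hW')).reindex (Equiv.sumCompl (· ∈ s))
  refine ⟨c, fun j hj => ?_, fun w hw i hi => ?_⟩
  · simp [c, Equiv.sumCompl_symm_apply_of_pos hj]
  · have : (W.prodEquivOfIsCompl W' hW').symm w = (⟨w, hw⟩, 0) :=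
      Submodule.prodEquivOfIsCompl_symm_apply_left W W' hW' ⟨w, hw⟩
    simp [c, Equiv.sumCompl_symm_apply_of_neg hi, this]

end LinearAlgebra

namespace Matrix

variable {K : Type*} [Field K]

section VanishingOn

variable {ι κ : Type*}

variable (K) in
def vanishingOn (P : ι → κ → Prop) : Submodule K (Matrix ι κ K) where
  carrier := {A | ∀ i j, P i j → A i j = 0}
  add_mem' ha hb i j h := by simp [ha i j h, hb i j h]
  zero_mem' _ _ _ := rfl
  smul_mem' c _ ha i j h := by simp [ha i j h]

@[simp] lemma mem_vanishingOn {P : ι → κ → Prop} {A : Matrix ι κ K} :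
    A ∈ vanishingOn K P ↔ ∀ i j, P i j → A i j = 0 := Iff.rfl

lemma finrank_vanishingOn [Fintype ι] [Fintype κ] (P : ι → κ → Prop)
    [∀ i j, Decidable (P i j)] :
    finrank K (vanishingOn K P) = Fintype.card {p : ι × κ // ¬ P p.1 p.2} := by
  let e : vanishingOn K P ≃ₗ[K] ({p : ι × κ // ¬ P p.1 p.2} → K) :=
    { toFun A p := (A : Matrix ι κ K) p.1.1 p.1.2
      map_add' _ _ := rfl
      map_smul' _ _ := rfl
      invFun f := ⟨of fun i j => if h : P i j then 0 else f ⟨(i, j), h⟩,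
        fun i j h => by simp [h]⟩
      left_inv A := by
        ext i j
        by_cases h : P i j <;> simp [h, A.2 i j]
      right_inv f := by funext p; simp [p.2] }
  simp [e.finrank_eq]

lemma vanishingOn_sup (P P' : ι → κ → Prop) [∀ i j, Decidable (P i j)] :
    vanishingOn K P ⊔ vanishingOn K P' = vanishingOn K (fun i j => P i j ∧ P' i j) := by
  refine le_antisymm (sup_le (fun A hA i j h => hA i j h.1) (fun A hA i j h => hA i j h.2)) ?_
  intro A hA
  refine Submodule.mem_sup.2 ⟨of fun i j => if P i j then 0 else A i j, ?_,
    of fun i j => if P i j then A i j else 0, ?_, ?_⟩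
  · intro i j h; simp [h]
  · intro i j h'
    rw [of_apply]
    split_ifs with h
    exacts [hA i j ⟨h, h'⟩, rfl]
  · ext i j; by_cases h : P i j <;> simp [h]

end VanishingOn

section Invariant

variable {ι : Type*} [Fintype ι]

lemma eq_bot_or_eq_top_of_forall_mulVec_mem [DecidableEq ι] (W : Submodule K (ι → K))
    (hW : ∀ (A : Matrix ι ι K), ∀ w ∈ W, A *ᵥ w ∈ W) : W = ⊥ ∨ W = ⊤ := by
  refine or_iff_not_imp_left.2 fun h => eq_top_iff.2 fun v _ => ?_
  obtain ⟨w, hw, hw0⟩ := Submodule.exists_mem_ne_zero_of_ne_bot h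
  obtain ⟨j, hj⟩ : ∃ j, w j ≠ 0 := Function.ne_iff.1 hw0
  have : vecMulVec v (Pi.single j (w j)⁻¹) *ᵥ w = v := by
    simp [vecMulVec_mulVec, single_dotProduct, inv_mul_cancel₀ hj]
  exact this ▸ hW _ w hw

variable (Q : Submodule K (Matrix ι ι K))

def mulVecSpan (u : ι → K) : Submodule K (ι → K) :=
  Submodule.span K (insert u ((fun a => a *ᵥ u) '' Q))

def vecMulSpan (v : ι → K) : Submodule K (ι → K) :=
  Submodule.span K (insert v ((fun a => v ᵥ* a) '' Q))

variable {Q}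

lemma mulVec_mem_mulVecSpan (hQ : ∀ a ∈ Q, ∀ b ∈ Q, a * b ∈ Q) (u : ι → K) :
    ∀ a ∈ Q, ∀ w ∈ mulVecSpan Q u, a *ᵥ w ∈ mulVecSpan Q u := by
  intro a ha w hw
  refine (Submodule.span_le (p := (mulVecSpan Q u).comap (mulVecLin a)).2 ?_) hw
  rintro _ (rfl | ⟨b, hb, rfl⟩)
  · exact Submodule.subset_span (Or.inr ⟨a, ha, rfl⟩)
  · exact Submodule.subset_span (Or.inr ⟨a * b, hQ a ha b hb, (mulVec_mulVec _ _ _).symm⟩)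

lemma vecMul_mem_vecMulSpan (hQ : ∀ a ∈ Q, ∀ b ∈ Q, a * b ∈ Q) (v : ι → K) :
    ∀ a ∈ Q, ∀ z ∈ vecMulSpan Q v, z ᵥ* a ∈ vecMulSpan Q v := by
  intro a ha z hz
  refine (Submodule.span_le (p := (vecMulSpan Q v).comap (vecMulLinear a)).2 ?_) hz
  rintro _ (rfl | ⟨b, hb, rfl⟩)
  · exact Submodule.subset_span (Or.inr ⟨a, ha, rfl⟩)
  · exact Submodule.subset_span (Or.inr ⟨b * a, hQ b hb a ha, (vecMul_vecMul _ _ _).symm⟩)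

lemma vecMulVec_mem_of_mem_span (hQ : ∀ a ∈ Q, ∀ b ∈ Q, a * b ∈ Q) {u v : ι → K}
    (hx : vecMulVec u v ∈ Q) {w z : ι → K} (hw : w ∈ mulVecSpan Q u) (hz : z ∈ vecMulSpan Q v) :
    vecMulVec w z ∈ Q := by
  have hu : ∀ z ∈ vecMulSpan Q v, vecMulVec u z ∈ Q := by
    intro z hz
    refine (Submodule.span_le (p := Q.comap (vecMulVecBilin K K u)).2 ?_) hz
    rintro _ (rfl | ⟨b, hb, rfl⟩)
    · exact hx
    · show vecMulVec u (v ᵥ* b) ∈ Q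
      rw [← vecMulVec_mul]
      exact hQ _ hx _ hb
  refine (Submodule.span_le (p := Q.comap ((vecMulVecBilin K K).flip z)).2 ?_) hw
  rintro _ (rfl | ⟨a, ha, rfl⟩)
  · exact hu z hz
  · show vecMulVec (a *ᵥ u) z ∈ Q
    rw [← mul_vecMulVec]
    exact hQ _ ha _ (hu z hz)

lemma eq_top_of_vecMulVec_mem [DecidableEq ι] (hQ : ∀ a ∈ Q, ∀ b ∈ Q, a * b ∈ Q)
    {u v : ι → K}
    (hx : vecMulVec u v ∈ Q) (hu : mulVecSpan Q u = ⊤) (hv : vecMulSpan Q v = ⊤) : Q = ⊤ := by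
  refine eq_top_iff.2 fun A _ => ?_
  rw [matrix_eq_sum_single A]
  refine Submodule.sum_mem _ fun i _ => Submodule.sum_mem _ fun j _ => ?_
  rw [← mul_one (A i j), ← smul_eq_mul, ← smul_single, single_eq_single_vecMulVec_single]
  exact Q.smul_mem _ (vecMulVec_mem_of_mem_span hQ hx (hu ▸ trivial) (hv ▸ trivial))

lemma exists_vecMulVec_mem [DecidableEq ι]
    (hdim : Fintype.card ι * Fintype.card ι < finrank K Q + Fintype.card ι) (i₀ : ι) :
    ∃ v ≠ 0, vecMulVec (Pi.single i₀ 1) v ∈ Q := by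
  set f := vecMulVecBilin K K (Pi.single i₀ (1 : K)) (n := ι)
  have hf : Function.Injective f := fun v w h => by
    funext j
    simpa [f, vecMulVec_apply] using congrFun (congrFun h i₀) j
  have hne : Q ⊓ LinearMap.range f ≠ ⊥ := by
    intro h
    have h1 := Submodule.finrank_sup_add_finrank_inf_eq Q (LinearMap.range f)
    have h2 := Submodule.finrank_le (Q ⊔ LinearMap.range f)
    rw [h, finrank_bot, LinearMap.finrank_range_of_inj hf, finrank_pi] at h1
    rw [finrank_matrix, finrank_self, mul_one] at h2
    omega
  obtain ⟨x, ⟨hxQ, v, rfl⟩, hx0⟩ := Submodule.exists_mem_ne_zero_of_ne_bot hne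
  exact ⟨v, fun hv => hx0 (by simp [f, hv]), hxQ⟩

theorem eq_top_or_exists_invariant [DecidableEq ι] [Nonempty ι]
    (hQ : ∀ a ∈ Q, ∀ b ∈ Q, a * b ∈ Q)
    (hdim : Fintype.card ι * Fintype.card ι < finrank K Q + Fintype.card ι) :
    Q = ⊤ ∨ ∃ W : Submodule K (ι → K), W ≠ ⊥ ∧ W ≠ ⊤ ∧ ∀ a ∈ Q, ∀ w ∈ W, a *ᵥ w ∈ W := by
  obtain ⟨i₀⟩ := ‹Nonempty ι›
  obtain ⟨v, hv0, hx⟩ := exists_vecMulVec_mem hdim i₀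
  set u : ι → K := Pi.single i₀ 1
  by_cases hU : mulVecSpan Q u = ⊤
  · by_cases hV : vecMulSpan Q v = ⊤
    · exact .inl (eq_top_of_vecMulVec_mem hQ hx hU hV)
    -- the annihilator of `v` and `v Q` under the dot product is `Q`-invariant
    set W := LinearMap.BilinForm.orthogonal (dotProductBilin K K) (vecMulSpan Q v)
    have hmem : ∀ w, w ∈ W ↔ ∀ z ∈ vecMulSpan Q v, z ⬝ᵥ w = 0 := fun w =>
      LinearMap.BilinForm.mem_orthogonal_iff
    refine .inr ⟨W, fun hW => ?_, fun hW => hv0 ?_, fun a ha w hw => ?_⟩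
    · have h : finrank K (vecMulSpan Q v) + finrank K W = _ :=
        LinearMap.BilinForm.finrank_add_finrank_orthogonal' (vecMulSpan Q v)
      have h' := Submodule.finrank_lt hV
      rw [hW, finrank_bot] at h
      omega
    · funext j
      simpa using (hmem _).1 (hW ▸ trivial : Pi.single j 1 ∈ W) v
        (Submodule.subset_span (Set.mem_insert _ _))
    · refine (hmem _).2 fun z hz => ?_
      rw [dotProduct_mulVec]
      exact (hmem w).1 hw _ (vecMul_mem_vecMulSpan hQ v a ha z hz)
  · refine .inr ⟨mulVecSpan Q u, fun h => ?_, hU, mulVec_mem_mulVecSpan hQ u⟩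
    have hu : u ∈ mulVecSpan Q u := Submodule.subset_span (Set.mem_insert _ _)
    rw [h, Submodule.mem_bot] at hu
    simpa [u] using congrFun hu i₀

end Invariant

section Stabilizer

variable {ι : Type*} [Fintype ι] [DecidableEq ι]

def conjEquiv (g : (Matrix ι ι K)ˣ) : Matrix ι ι K ≃ₗ[K] Matrix ι ι K where
  toFun A := ↑g⁻¹ * A * ↑g
  invFun A := ↑g * A * ↑g⁻¹
  map_add' A B := by simp [mul_add, add_mul]
  map_smul' c A := by simp
  left_inv A := by simp [mul_assoc]
  right_inv A := by simp [mul_assoc]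

@[simp] lemma conjEquiv_apply (g : (Matrix ι ι K)ˣ) (A : Matrix ι ι K) :
    conjEquiv g A = (↑g⁻¹ : Matrix ι ι K) * A * (↑g : Matrix ι ι K) := rfl

lemma conjEquiv_inv (g : (Matrix ι ι K)ˣ) : conjEquiv g⁻¹ = (conjEquiv g).symm := by
  ext A : 1
  exact (conjEquiv g).eq_symm_apply.2 (by simp [mul_assoc])

variable (K) in
/-- The matrices mapping `span {e_j | j ∈ s}` into itself. -/
def coordStabilizer (s : Finset ι) : Submodule K (Matrix ι ι K) :=
  vanishingOn K (fun i j => i ∉ s ∧ j ∈ s)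

lemma finrank_coordStabilizer (s : Finset ι) :
    finrank K (coordStabilizer K s) + (Fintype.card ι - s.card) * s.card =
      Fintype.card ι * Fintype.card ι := by
  have e : {p : ι × ι // p.1 ∉ s ∧ p.2 ∈ s} ≃ {i // i ∉ s} × {j // j ∈ s} :=
    Equiv.subtypeProdEquivProd (p := fun i => i ∉ s) (q := fun j => j ∈ s)
  have hcard : Fintype.card {p : ι × ι // p.1 ∉ s ∧ p.2 ∈ s} =
      (Fintype.card ι - s.card) * s.card := by
    rw [Fintype.card_congr e, Fintype.card_prod, Fintype.card_subtype_compl, Fintype.card_coe]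
  have hle := Fintype.card_subtype_le (fun p : ι × ι => p.1 ∉ s ∧ p.2 ∈ s)
  rw [hcard, Fintype.card_prod] at hle
  rw [coordStabilizer, finrank_vanishingOn, Fintype.card_subtype_compl, hcard, Fintype.card_prod]
  omega

variable {Q : Submodule K (Matrix ι ι K)} {W : Submodule K (ι → K)}

lemma exists_conj_le_coordStabilizer (hW : ∀ a ∈ Q, ∀ w ∈ W, a *ᵥ w ∈ W) (s : Finset ι)
    (hs : s.card = finrank K W) :
    ∃ g : (Matrix ι ι K)ˣ, Q.map (conjEquiv g).toLinearMap ≤ coordStabilizer K s := by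
  obtain ⟨c, hcW, hrepr⟩ := W.exists_basis_adapted s hs (by simp)
  let b := Pi.basisFun K ι
  let g : (Matrix ι ι K)ˣ :=
    ⟨b.toMatrix c, c.toMatrix b, b.toMatrix_mul_toMatrix_flip c, c.toMatrix_mul_toMatrix_flip b⟩
  refine ⟨g, ?_⟩
  rintro _ ⟨A, hA, rfl⟩ i j ⟨hi, hj⟩
  have hconj : conjEquiv g A = LinearMap.toMatrix c c (toLin' A) := by
    rw [← basis_toMatrix_mul_linearMap_toMatrix_mul_basis_toMatrix c b c b,
      LinearMap.toMatrix_eq_toMatrix', LinearMap.toMatrix'_toLin']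
    rfl
  change conjEquiv g A i j = 0
  rw [hconj, LinearMap.toMatrix_apply, toLin'_apply]
  exact hrepr _ (hW A hA _ (hcW j hj)) i hi

lemma one_mem_of_map_conjEquiv_eq_coordStabilizer {g : (Matrix ι ι K)ˣ} {s : Finset ι}
    (h : Q.map (conjEquiv g).toLinearMap = coordStabilizer K s) : (1 : Matrix ι ι K) ∈ Q := by
  have h1 : (1 : Matrix ι ι K) ∈ coordStabilizer K s := fun i j ⟨hi, hj⟩ =>
    one_apply_ne (by rintro rfl; exact hi hj)
  rw [← h] at h1
  obtain ⟨q, hq, hq1⟩ := h1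
  rwa [show q = 1 from (conjEquiv g).injective (hq1.trans (by simp))] at hq

lemma exists_conj_eq_coordStabilizer (hW : ∀ a ∈ Q, ∀ w ∈ W, a *ᵥ w ∈ W) (s : Finset ι)
    (hs : s.card = finrank K W)
    (hQ : finrank K Q + (Fintype.card ι - s.card) * s.card = Fintype.card ι * Fintype.card ι) :
    ∃ g : (Matrix ι ι K)ˣ, Q.map (conjEquiv g).toLinearMap = coordStabilizer K s := by
  obtain ⟨g, hg⟩ := exists_conj_le_coordStabilizer hW s hs
  refine ⟨g, Submodule.eq_of_le_of_finrank_eq hg ?_⟩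
  have := finrank_coordStabilizer (K := K) s
  rw [LinearEquiv.finrank_map_eq]
  omega

lemma finrank_add_le_of_invariant (hW : ∀ a ∈ Q, ∀ w ∈ W, a *ᵥ w ∈ W) (hW0 : W ≠ ⊥)
    (hWT : W ≠ ⊤) :
    finrank K Q + Fintype.card ι + (Fintype.card ι - finrank K W - 1) * (finrank K W - 1) ≤
      Fintype.card ι * Fintype.card ι + 1 := by
  have hk0 : 0 < finrank K W := Nat.pos_of_ne_zero (mt Submodule.finrank_eq_zero.1 hW0)
  have hkm : finrank K W < Fintype.card ι := by simpa using Submodule.finrank_lt hWT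
  obtain ⟨s, -, hs⟩ := Finset.exists_subset_card_eq (s := (Finset.univ : Finset ι))
    (n := finrank K W) (by simpa using W.finrank_le)
  obtain ⟨g, hg⟩ := exists_conj_le_coordStabilizer hW s hs
  have h1 := Submodule.finrank_mono hg
  have h2 := finrank_coordStabilizer (K := K) s
  rw [LinearEquiv.finrank_map_eq] at h1
  rw [hs, Nat.sub_mul_eq_sub_one_add hk0 hkm] at h2
  omega

theorem finrank_add_le_of_ne_top [Nonempty ι] (hQ : ∀ a ∈ Q, ∀ b ∈ Q, a * b ∈ Q)
    (hne : Q ≠ ⊤) :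
    finrank K Q + Fintype.card ι ≤ Fintype.card ι * Fintype.card ι + 1 := by
  by_contra! h
  obtain ⟨W, hW0, hWT, hW⟩ := (eq_top_or_exists_invariant hQ (by omega)).resolve_left hne
  have := finrank_add_le_of_invariant hW hW0 hWT
  omega

theorem exists_conj_eq_of_finrank_add_eq (hQ : ∀ a ∈ Q, ∀ b ∈ Q, a * b ∈ Q) (hne : Q ≠ ⊤)
    (hdim : finrank K Q + Fintype.card ι = Fintype.card ι * Fintype.card ι + 1) (i₀ i₁ : ι) :
    ∃ g : (Matrix ι ι K)ˣ, Q.map (conjEquiv g).toLinearMap = coordStabilizer K {i₀} ∨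
      Q.map (conjEquiv g).toLinearMap = coordStabilizer K {i₁}ᶜ := by
  have : Nonempty ι := ⟨i₀⟩
  obtain ⟨W, hW0, hWT, hW⟩ := (eq_top_or_exists_invariant hQ (by omega)).resolve_left hne
  have hk0 : 0 < finrank K W := Nat.pos_of_ne_zero (mt Submodule.finrank_eq_zero.1 hW0)
  have hkm : finrank K W < Fintype.card ι := by simpa using Submodule.finrank_lt hWT
  have hle := finrank_add_le_of_invariant hW hW0 hWT
  -- equality in the bound forces `W` to be a line or a hyperplane
  rcases Nat.mul_eq_zero.1 (show (Fintype.card ι - finrank K W - 1) * (finrank K W - 1) = 0 by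
      omega) with h | h
  · obtain ⟨g, hg⟩ := exists_conj_eq_coordStabilizer hW {i₁}ᶜ
      (by rw [Finset.card_compl, Finset.card_singleton]; omega)
      (by rw [Finset.card_compl, Finset.card_singleton, Nat.sub_sub_self (by omega)]; omega)
    exact ⟨g, .inr hg⟩
  · obtain ⟨g, hg⟩ := exists_conj_eq_coordStabilizer hW {i₀}
      (by rw [Finset.card_singleton]; omega)
      (by rw [Finset.card_singleton, Nat.sub_mul_eq_sub_one_add (by omega) (by omega)]; omega)
    exact ⟨g, .inl hg⟩

end Stabilizer

section Parabolic

variable {ι : Type*} (ℓ : ι)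

def corner : Matrix ι ι K →ₗ[K] Matrix {i // i ≠ ℓ} {i // i ≠ ℓ} K where
  toFun A := A.submatrix (↑) (↑)
  map_add' _ _ := rfl
  map_smul' _ _ := rfl

@[simp] lemma corner_apply (A : Matrix ι ι K) (i j : {i // i ≠ ℓ}) :
    corner ℓ A i j = A i j := rfl

def cornerColumn : Matrix ι ι K →ₗ[K] ({i // i ≠ ℓ} → K) where
  toFun A i := A i ℓ
  map_add' _ _ := rfl
  map_smul' _ _ := rfl

@[simp] lemma cornerColumn_apply (A : Matrix ι ι K) (i : {i // i ≠ ℓ}) :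
    cornerColumn ℓ A i = A i ℓ := rfl

variable (K) in
/-- The paper's `M[R_ℓ] + K·E_ℓℓ`. -/
def parabolic : Submodule K (Matrix ι ι K) := vanishingOn K (fun i j => i = ℓ ∧ j ≠ ℓ)

variable (K) in
/-- The paper's `M[R_ℓ]`. -/
def rowVanishing : Submodule K (Matrix ι ι K) := vanishingOn K (fun i _ => i = ℓ)

def parabolicOver (Q : Submodule K (Matrix {i // i ≠ ℓ} {i // i ≠ ℓ} K)) :
    Submodule K (Matrix ι ι K) :=
  parabolic K ℓ ⊓ Q.comap (corner ℓ)

variable {ℓ} [Fintype ι] {M N A : Matrix ι ι K}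

lemma mul_mem_parabolic (hM : M ∈ parabolic K ℓ) (hN : N ∈ parabolic K ℓ) :
    M * N ∈ parabolic K ℓ := by
  rintro i j ⟨rfl, hj⟩
  rw [mul_apply, Fintype.sum_eq_single i fun k hk => by rw [hM i k ⟨rfl, hk⟩, zero_mul],
    hN i j ⟨rfl, hj⟩, mul_zero]

lemma mul_mem_rowVanishing (hM : M ∈ parabolic K ℓ) (hN : N ∈ rowVanishing K ℓ) :
    M * N ∈ rowVanishing K ℓ := by
  rintro i j rfl
  rw [mul_apply, Fintype.sum_eq_single i fun k hk => by rw [hM i k ⟨rfl, hk⟩, zero_mul],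
    hN i j rfl, mul_zero]

variable [DecidableEq ι]

variable (ℓ) in
def cornerEmbedding : Matrix {i // i ≠ ℓ} {i // i ≠ ℓ} K →* Matrix ι ι K where
  toFun X := reindex (Equiv.sumCompl (· ≠ ℓ)) (Equiv.sumCompl (· ≠ ℓ)) (fromBlocks X 0 0 1)
  map_one' := by simp
  map_mul' X Y := by simp [fromBlocks_multiply]

lemma cornerEmbedding_apply_left (X : Matrix {i // i ≠ ℓ} {i // i ≠ ℓ} K) (j : ι) :
    cornerEmbedding ℓ X ℓ j = (1 : Matrix ι ι K) ℓ j := by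
  by_cases hj : j = ℓ
  · subst hj; simp [cornerEmbedding, Equiv.sumCompl_symm_apply_of_neg]
  · simp [cornerEmbedding, Equiv.sumCompl_symm_apply_of_neg,
      Equiv.sumCompl_symm_apply_of_pos (p := (· ≠ ℓ)) hj, one_apply_ne (Ne.symm hj)]

@[simp] lemma corner_cornerEmbedding (X : Matrix {i // i ≠ ℓ} {i // i ≠ ℓ} K) :
    corner ℓ (cornerEmbedding ℓ X) = X := by
  ext i j
  simp [cornerEmbedding]

lemma corner_mul (M N : Matrix ι ι K) :
    corner ℓ (M * N) = corner ℓ M * corner ℓ N +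
      vecMulVec (fun i : {i // i ≠ ℓ} => M i ℓ) (fun j : {i // i ≠ ℓ} => N ℓ j) := by
  ext i j
  simp [mul_apply, Fintype.sum_eq_add_sum_subtype_ne _ ℓ, vecMulVec_apply, add_comm]

lemma corner_mul_of_mem_parabolic (M : Matrix ι ι K) (hN : N ∈ parabolic K ℓ) :
    corner ℓ (M * N) = corner ℓ M * corner ℓ N := by
  rw [corner_mul, add_eq_left]
  ext i j
  simp [vecMulVec_apply, hN ℓ j ⟨rfl, j.2⟩]

lemma cornerEmbedding_mem_parabolic (X : Matrix {i // i ≠ ℓ} {i // i ≠ ℓ} K) :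
    cornerEmbedding ℓ X ∈ parabolic K ℓ := by
  rintro i j ⟨rfl, hj⟩
  rw [cornerEmbedding_apply_left, one_apply_ne (Ne.symm hj)]

lemma conjEquiv_cornerEmbedding_mem_parabolic (g : (Matrix {i // i ≠ ℓ} {i // i ≠ ℓ} K)ˣ)
    (hA : A ∈ parabolic K ℓ) : conjEquiv (Units.map (cornerEmbedding ℓ) g) A ∈ parabolic K ℓ :=
  mul_mem_parabolic (mul_mem_parabolic (cornerEmbedding_mem_parabolic _) hA)
    (cornerEmbedding_mem_parabolic _)

lemma corner_conjEquiv_cornerEmbedding (g : (Matrix {i // i ≠ ℓ} {i // i ≠ ℓ} K)ˣ)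
    (hA : A ∈ parabolic K ℓ) :
    corner ℓ (conjEquiv (Units.map (cornerEmbedding ℓ) g) A) = conjEquiv g (corner ℓ A) := by
  simp only [conjEquiv_apply, Units.coe_map_inv, Units.coe_map]
  rw [corner_mul_of_mem_parabolic _ (cornerEmbedding_mem_parabolic _),
    corner_mul_of_mem_parabolic _ hA,
    corner_cornerEmbedding, corner_cornerEmbedding]

lemma map_conjEquiv_cornerEmbedding_parabolicOver (g : (Matrix {i // i ≠ ℓ} {i // i ≠ ℓ} K)ˣ)
    (Q : Submodule K (Matrix {i // i ≠ ℓ} {i // i ≠ ℓ} K)) :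
    (parabolicOver ℓ Q).map (conjEquiv (Units.map (cornerEmbedding ℓ) g)).toLinearMap =
      parabolicOver ℓ (Q.map (conjEquiv g).toLinearMap) := by
  ext B
  constructor
  · rintro ⟨A, ⟨hAP, hAQ⟩, rfl⟩
    exact ⟨conjEquiv_cornerEmbedding_mem_parabolic g hAP, corner ℓ A, hAQ,
      (corner_conjEquiv_cornerEmbedding g hAP).symm⟩
  · rintro ⟨hBP, q, hq, hqB⟩
    refine ⟨conjEquiv (Units.map (cornerEmbedding ℓ) g⁻¹) B,
      ⟨conjEquiv_cornerEmbedding_mem_parabolic _ hBP, ?_⟩, ?_⟩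
    · change corner ℓ (conjEquiv _ B) ∈ Q
      rw [corner_conjEquiv_cornerEmbedding _ hBP, ← hqB, conjEquiv_inv, LinearEquiv.coe_coe,
        LinearEquiv.symm_apply_apply]
      exact hq
    · simp only [LinearEquiv.coe_coe, map_inv, conjEquiv_inv, LinearEquiv.apply_symm_apply]

lemma finrank_parabolicOver (Q : Submodule K (Matrix {i // i ≠ ℓ} {i // i ≠ ℓ} K)) :
    finrank K (parabolicOver ℓ Q) = finrank K Q + Fintype.card ι := by
  have hmap : (parabolicOver ℓ Q).map (corner ℓ) = Q :=
    le_antisymm (Submodule.map_le_iff_le_comap.2 inf_le_right) fun X hX =>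
      ⟨cornerEmbedding ℓ X, ⟨cornerEmbedding_mem_parabolic X, by simpa⟩, corner_cornerEmbedding X⟩
  have hker : parabolicOver ℓ Q ⊓ LinearMap.ker (corner ℓ) =
      vanishingOn K (fun (_ : ι) (j : ι) => j ≠ ℓ) := by
    ext A
    refine ⟨fun ⟨⟨hP, _⟩, hA⟩ i j hj => ?_, fun hA => ⟨⟨fun i j h => hA i j h.2, ?_⟩, ?_⟩⟩
    · by_cases hi : i = ℓ
      · exact hP i j ⟨hi, hj⟩
      · exact congrFun (congrFun (show corner ℓ A = 0 from hA) ⟨i, hi⟩) ⟨j, hj⟩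
    all_goals
      have h0 : corner ℓ A = 0 := by ext i j; exact hA i j j.2
      simp [h0]
  have hcard : Fintype.card {p : ι × ι // ¬ p.2 ≠ ℓ} = Fintype.card ι :=
    Fintype.card_congr ⟨fun p => p.1.1, fun i => ⟨(i, ℓ), by simp⟩,
      fun ⟨⟨_, _⟩, h⟩ => by simp only [ne_eq, not_not] at h; subst h; rfl, fun _ => rfl⟩
  rw [← Submodule.finrank_map_add_finrank_inf_ker (corner ℓ), hmap, hker, finrank_vanishingOn,
    hcard]

lemma finrank_rowVanishing :
    finrank K (rowVanishing K ℓ) = Fintype.card {i // i ≠ ℓ} * Fintype.card ι := by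
  rw [rowVanishing, finrank_vanishingOn,
    Fintype.card_congr (Equiv.prodSubtypeFstEquivSubtypeProd (p := fun i => ¬ i = ℓ)),
    Fintype.card_prod]

end Parabolic

section Classification

variable {ι : Type*} [Fintype ι] [DecidableEq ι] (ℓ : ι)
  (B : NonUnitalSubalgebra K (Matrix ι ι K))

def rowZeroPart : Submodule K (Matrix ι ι K) := B.toSubmodule ⊓ rowVanishing K ℓ

def cornerImage : Submodule K (Matrix {i // i ≠ ℓ} {i // i ≠ ℓ} K) :=
  (rowZeroPart ℓ B).map (corner ℓ)

def columnImage : Submodule K ({i // i ≠ ℓ} → K) :=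
  (rowZeroPart ℓ B ⊓ LinearMap.ker (corner ℓ)).map (cornerColumn ℓ)

lemma finrank_rowZeroPart :
    finrank K (rowZeroPart ℓ B) = finrank K (cornerImage ℓ B) + finrank K (columnImage ℓ B) := by
  have hinj :
      rowZeroPart ℓ B ⊓ LinearMap.ker (corner ℓ) ⊓ LinearMap.ker (cornerColumn ℓ) = ⊥ := by
    refine eq_bot_iff.2 ?_
    rintro a ⟨⟨⟨-, hR⟩, hc⟩, hcol⟩
    ext i j
    by_cases hi : i = ℓ
    · exact hR i j hi
    by_cases hj : j = ℓ
    · subst hj; exact congrFun (show cornerColumn j a = 0 from hcol) ⟨i, hi⟩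
    · exact congrFun (congrFun (show corner ℓ a = 0 from hc) ⟨i, hi⟩) ⟨j, hj⟩
  have h1 := Submodule.finrank_map_add_finrank_inf_ker (corner ℓ) (rowZeroPart ℓ B)
  have h2 := Submodule.finrank_map_add_finrank_inf_ker (cornerColumn ℓ)
    (rowZeroPart ℓ B ⊓ LinearMap.ker (corner ℓ))
  rw [hinj, finrank_bot, add_zero] at h2
  rw [cornerImage, columnImage]
  omega

variable {ℓ B}

lemma mul_mem_cornerImage (hBP : B.toSubmodule ≤ parabolic K ℓ) :
    ∀ a ∈ cornerImage ℓ B, ∀ b ∈ cornerImage ℓ B, a * b ∈ cornerImage ℓ B := by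
  rintro _ ⟨a, ⟨haB, -⟩, rfl⟩ _ ⟨b, ⟨hbB, hbR⟩, rfl⟩
  exact ⟨a * b, ⟨B.mul_mem haB hbB, mul_mem_rowVanishing (hBP haB) hbR⟩,
    corner_mul_of_mem_parabolic a (hBP hbB)⟩

lemma finrank_le_finrank_rowZeroPart_add_one (hBP : B.toSubmodule ≤ parabolic K ℓ) :
    finrank K B.toSubmodule ≤ finrank K (rowZeroPart ℓ B) + 1 := by
  have h := Submodule.finrank_map_add_finrank_inf_ker (entryLinearMap K K ℓ ℓ) B.toSubmodule
  have h1 : finrank K (B.toSubmodule.map (entryLinearMap K K ℓ ℓ)) ≤ 1 :=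
    (Submodule.finrank_le _).trans (finrank_self K).le
  have h2 : B.toSubmodule ⊓ LinearMap.ker (entryLinearMap K K ℓ ℓ) ≤ rowZeroPart ℓ B := by
    rintro a ⟨ha, h0⟩
    refine ⟨ha, fun i j hi => ?_⟩
    subst hi
    by_cases hj : j = i
    · subst hj; exact h0
    · exact hBP ha i j ⟨rfl, hj⟩
  have := Submodule.finrank_mono h2
  omega

lemma mulVec_mem_columnImage (hBP : B.toSubmodule ≤ parabolic K ℓ) :
    ∀ q ∈ cornerImage ℓ B, ∀ w ∈ columnImage ℓ B, q *ᵥ w ∈ columnImage ℓ B := by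
  rintro _ ⟨a, ⟨haB, -⟩, rfl⟩ _ ⟨c, ⟨⟨hcB, hcR⟩, hc0⟩, rfl⟩
  refine ⟨a * c, ⟨⟨B.mul_mem haB hcB, mul_mem_rowVanishing (hBP haB) hcR⟩, ?_⟩, ?_⟩
  · change corner ℓ (a * c) = 0
    rw [corner_mul_of_mem_parabolic a (hBP hcB), show corner ℓ c = 0 from hc0, mul_zero]
  · funext i
    simp [mul_apply, mulVec, dotProduct, Fintype.sum_eq_add_sum_subtype_ne _ ℓ,
      hcR ℓ ℓ rfl]

lemma le_parabolicOver_of_one_mem (hBP : B.toSubmodule ≤ parabolic K ℓ)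
    (h1 : (1 : Matrix {i // i ≠ ℓ} {i // i ≠ ℓ} K) ∈ cornerImage ℓ B) :
    B.toSubmodule ≤ parabolicOver ℓ (cornerImage ℓ B) := by
  obtain ⟨b, ⟨hbB, hbR⟩, hb1⟩ := h1
  refine fun a ha => ⟨hBP ha, a * b, ⟨B.mul_mem ha hbB, mul_mem_rowVanishing (hBP ha) hbR⟩, ?_⟩
  rw [corner_mul_of_mem_parabolic a (hBP hbB), hb1, mul_one]

lemma cornerImage_ne_top (hBP : B.toSubmodule ≤ parabolic K ℓ)
    (hBR : B.toSubmodule ≠ rowVanishing K ℓ)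
    (hdim : finrank K B.toSubmodule =
      Fintype.card {i // i ≠ ℓ} * Fintype.card {i // i ≠ ℓ} + 2)
    (hm : 2 ≤ Fintype.card {i // i ≠ ℓ}) : cornerImage ℓ B ≠ ⊤ := by
  intro hQ
  have h0 := finrank_rowZeroPart ℓ B
  have h1 := finrank_le_finrank_rowZeroPart_add_one hBP
  have h2 : finrank K (rowZeroPart ℓ B) ≤ finrank K B.toSubmodule :=
    Submodule.finrank_mono inf_le_left
  rw [hQ, finrank_top, finrank_matrix, finrank_self, mul_one] at h0
  rcases eq_bot_or_eq_top_of_forall_mulVec_mem (columnImage ℓ B)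
    (fun A => mulVec_mem_columnImage hBP A (hQ ▸ Submodule.mem_top)) with hW | hW
  · rw [hW, finrank_bot] at h0
    omega
  · rw [hW, finrank_top, finrank_pi] at h0
    have hm2 : Fintype.card {i // i ≠ ℓ} = 2 := by omega
    have hB0 : rowZeroPart ℓ B = B.toSubmodule :=
      Submodule.eq_of_le_of_finrank_eq inf_le_left (by rw [hdim, h0, hm2])
    refine hBR (Submodule.eq_of_le_of_finrank_eq (hB0 ▸ inf_le_right) ?_)
    rw [finrank_rowVanishing, ← Fintype.card_subtype_ne_add_one ℓ, hdim, hm2]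

theorem exists_conj_eq_parabolicOver (hBP : B.toSubmodule ≤ parabolic K ℓ)
    (hBR : B.toSubmodule ≠ rowVanishing K ℓ)
    (hdim : finrank K B.toSubmodule =
      Fintype.card {i // i ≠ ℓ} * Fintype.card {i // i ≠ ℓ} + 2)
    (hm : 2 ≤ Fintype.card {i // i ≠ ℓ}) (i₀ i₁ : {i // i ≠ ℓ}) :
    ∃ S : (Matrix ι ι K)ˣ,
      B.toSubmodule.map (conjEquiv S).toLinearMap = parabolicOver ℓ (coordStabilizer K {i₀}) ∨
      B.toSubmodule.map (conjEquiv S).toLinearMap = parabolicOver ℓ (coordStabilizer K {i₁}ᶜ) := by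
  have hQ := cornerImage_ne_top hBP hBR hdim hm
  have : Nonempty {i // i ≠ ℓ} := ⟨i₀⟩
  have h1 := finrank_add_le_of_ne_top (mul_mem_cornerImage hBP) hQ
  have h2 := finrank_rowZeroPart ℓ B
  have h3 := finrank_le_finrank_rowZeroPart_add_one hBP
  have h4 := (columnImage ℓ B).finrank_le
  rw [finrank_pi] at h4
  obtain ⟨g, hg⟩ :=
    exists_conj_eq_of_finrank_add_eq (mul_mem_cornerImage hBP) hQ (by omega) i₀ i₁
  have hone : (1 : Matrix {i // i ≠ ℓ} {i // i ≠ ℓ} K) ∈ cornerImage ℓ B := by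
    rcases hg with hg | hg <;> exact one_mem_of_map_conjEquiv_eq_coordStabilizer hg
  have hB : B.toSubmodule = parabolicOver ℓ (cornerImage ℓ B) :=
    Submodule.eq_of_le_of_finrank_eq (le_parabolicOver_of_one_mem hBP hone)
      (by rw [finrank_parabolicOver, ← Fintype.card_subtype_ne_add_one ℓ]; omega)
  refine ⟨Units.map (cornerEmbedding ℓ) g, ?_⟩
  rw [hB, map_conjEquiv_cornerEmbedding_parabolicOver]
  exact hg.imp (congrArg _) (congrArg _)

end Classification

section Targets

variable {ι : Type*} [DecidableEq ι]

lemma range_smul_single (z : ι) :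
    Set.range (fun c : K => c • single z z (1 : K)) =
      ↑(vanishingOn K (fun i j => ¬ (i = z ∧ j = z))) := by
  ext A
  refine ⟨?_, fun hA => ⟨A z z, ?_⟩⟩
  · rintro ⟨c, rfl⟩ i j h
    change (c • single z z (1 : K)) i j = 0
    rw [smul_apply, single_apply, if_neg fun h' => h ⟨h'.1.symm, h'.2.symm⟩, smul_zero]
  · ext i j
    by_cases h : i = z ∧ j = z
    · obtain ⟨rfl, rfl⟩ := h; simp
    · simp [single_apply, hA i j h]
      tauto

variable [Fintype ι]

lemma range_mul_single_self (ℓ : ι) :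
    Set.range (fun M : Matrix ι ι K => M * single ℓ ℓ 1) =
      ↑(vanishingOn K (fun (_ : ι) (j : ι) => j ≠ ℓ)) := by
  ext A
  refine ⟨?_, fun hA => ⟨A, ?_⟩⟩
  · rintro ⟨M, rfl⟩ i j hj
    exact mul_single_apply_of_ne _ _ _ _ _ hj M
  · ext i j
    change (A * single ℓ ℓ (1 : K)) i j = A i j
    by_cases hj : j = ℓ
    · subst hj; rw [mul_single_apply_same, mul_one]
    · rw [mul_single_apply_of_ne _ _ _ _ _ hj, hA i j hj]

variable {ℓ : ι}

lemma coe_parabolicOver_coordStabilizer_singleton (z : {i // i ≠ ℓ}) :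
    (↑(parabolicOver ℓ (coordStabilizer K {z})) : Set (Matrix ι ι K)) =
      Set.range (fun M : Matrix ι ι K => M * single ℓ ℓ 1) +
        {A : Matrix ι ι K | (∀ j, A ℓ j = 0) ∧ ∀ i, A i z = 0} +
        Set.range (fun c : K => c • single (z : ι) (z : ι) (1 : K)) := by
  have hZ : {A : Matrix ι ι K | (∀ j, A ℓ j = 0) ∧ ∀ i, A i z = 0} =
      ↑(vanishingOn K (fun i j => i = ℓ ∨ j = (z : ι))) := by
    ext A
    exact ⟨fun ⟨h1, h2⟩ i j h => h.elim (fun hi => hi ▸ h1 j) (fun hj => hj ▸ h2 i),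
      fun h => ⟨fun j => h ℓ j (.inl rfl), fun i => h i z (.inr rfl)⟩⟩
  rw [range_mul_single_self, hZ, range_smul_single, ← Submodule.coe_sup, ← Submodule.coe_sup,
    vanishingOn_sup, vanishingOn_sup]
  congr 1
  ext A
  obtain ⟨z, hz⟩ := z
  simp [parabolicOver, parabolic, coordStabilizer]
  grind

lemma coe_parabolicOver_coordStabilizer_compl_singleton (z : {i // i ≠ ℓ}) :
    (↑(parabolicOver ℓ (coordStabilizer K {z}ᶜ)) : Set (Matrix ι ι K)) =
      Set.range (fun M : Matrix ι ι K => M * single ℓ ℓ 1) +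
        {A : Matrix ι ι K | (∀ j, A ℓ j = 0) ∧ ∀ j, A z j = 0} +
        Set.range (fun c : K => c • single (z : ι) (z : ι) (1 : K)) := by
  have hZ : {A : Matrix ι ι K | (∀ j, A ℓ j = 0) ∧ ∀ j, A z j = 0} =
      ↑(vanishingOn K (fun i (_ : ι) => i = ℓ ∨ i = (z : ι))) := by
    ext A
    exact ⟨fun ⟨h1, h2⟩ i j h => h.elim (fun hi => hi ▸ h1 j) (fun hi => hi ▸ h2 j),
      fun h => ⟨fun j => h ℓ j (.inl rfl), fun j => h z j (.inr rfl)⟩⟩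
  rw [range_mul_single_self, hZ, range_smul_single, ← Submodule.coe_sup, ← Submodule.coe_sup,
    vanishingOn_sup, vanishingOn_sup]
  congr 1
  ext A
  obtain ⟨z, hz⟩ := z
  simp [parabolicOver, parabolic, coordStabilizer]
  grind

end Targets

end Matrix

/-- For `n ≥ 3`, a proper subalgebra `B ≠ M[Rₙ]` of the parabolic
`P = M[Rₙ] + K·Eₙₙ` of dimension `n² - 2n + 3` is similar to
`M·Eₙₙ + M[Rₙ,C₁] + K·E₁₁` or to `M·Eₙₙ + M[Rₙ,Rₙ₋₁] + K·Eₙ₋₁,ₙ₋₁`. -/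
theorem stmt12 (K : Type*) [Field K] (n : ℕ) (hn : 3 ≤ n)
    (B : NonUnitalSubalgebra K (Matrix (Fin n) (Fin n) K))
    (hBP : (B : Set (Matrix (Fin n) (Fin n) K))
        ⊆ {A | ∀ j, j ≠ ⟨n - 1, by omega⟩ → A ⟨n - 1, by omega⟩ j = 0})
    (hBR : (B : Set (Matrix (Fin n) (Fin n) K))
        ≠ {A | ∀ j, A ⟨n - 1, by omega⟩ j = 0})
    (hdim : Module.finrank K B = n ^ 2 - 2 * n + 3) :
    ∃ S : (Matrix (Fin n) (Fin n) K)ˣ,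
      ((fun M => (↑S⁻¹ : Matrix (Fin n) (Fin n) K) * M * (↑S : Matrix (Fin n) (Fin n) K)) ''
          (B : Set (Matrix (Fin n) (Fin n) K))
        = (Set.range fun M : Matrix (Fin n) (Fin n) K =>
              M * Matrix.single (⟨n - 1, by omega⟩ : Fin n) (⟨n - 1, by omega⟩ : Fin n) (1 : K))
          + {A : Matrix (Fin n) (Fin n) K | (∀ j, A ⟨n - 1, by omega⟩ j = 0) ∧
              (∀ i, A i ⟨0, by omega⟩ = 0)}
          + (Set.range fun c : K =>
              c • Matrix.single (⟨0, by omega⟩ : Fin n) (⟨0, by omega⟩ : Fin n) (1 : K))) ∨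
      ((fun M => (↑S⁻¹ : Matrix (Fin n) (Fin n) K) * M * (↑S : Matrix (Fin n) (Fin n) K)) ''
          (B : Set (Matrix (Fin n) (Fin n) K))
        = (Set.range fun M : Matrix (Fin n) (Fin n) K =>
              M * Matrix.single (⟨n - 1, by omega⟩ : Fin n) (⟨n - 1, by omega⟩ : Fin n) (1 : K))
          + {A : Matrix (Fin n) (Fin n) K | (∀ j, A ⟨n - 1, by omega⟩ j = 0) ∧
              (∀ j, A ⟨n - 2, by omega⟩ j = 0)}
          + (Set.range fun c : K =>
              c • Matrix.single (⟨n - 2, by omega⟩ : Fin n) (⟨n - 2, by omega⟩ : Fin n) (1 : K))) := by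
  set ℓ : Fin n := ⟨n - 1, by omega⟩
  have hm : Fintype.card {i // i ≠ ℓ} = n - 1 := by
    have := Fintype.card_subtype_ne_add_one ℓ
    rw [Fintype.card_fin] at this
    omega
  have hdim' : finrank K B.toSubmodule = (n - 1) * (n - 1) + 2 := by
    obtain ⟨k, rfl⟩ : ∃ k, n = k + 1 := ⟨n - 1, by omega⟩
    have := Nat.mul_le_mul (show 2 ≤ k by omega) (show 2 ≤ k by omega)
    rw [show finrank K B.toSubmodule = finrank K B from rfl, hdim, Nat.add_sub_cancel,
      show (k + 1) ^ 2 = k * k + 2 * k + 1 by ring]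
    omega
  obtain ⟨S, hS⟩ := exists_conj_eq_parabolicOver (ℓ := ℓ) (B := B)
    (fun A hA i j ⟨hi, hj⟩ => hi ▸ hBP hA j hj)
    (fun h => hBR (Set.ext fun A =>
      (Set.ext_iff.1 (congrArg SetLike.coe h) A).trans
        ⟨fun hA j => hA ℓ j rfl, fun hA i j hi => hi ▸ hA j⟩))
    (by rw [hm, hdim']) (by omega)
    ⟨⟨0, by omega⟩, by simp [ℓ, Fin.ext_iff]; omega⟩
    ⟨⟨n - 2, by omega⟩, by simp [ℓ, Fin.ext_iff]; omega⟩
  refine ⟨S, ?_⟩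
  exact hS.imp
    (fun h => (congrArg SetLike.coe h).trans (coe_parabolicOver_coordStabilizer_singleton _))
    (fun h => (congrArg SetLike.coe h).trans (coe_parabolicOver_coordStabilizer_compl_singleton _))
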